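/- Let Q : P → F. The map H ↦ ~_H from subgroups of Aut(P/F) to equivalence relations on P refining ker Q is surjective: every equivalence relation R on P refining ker Q equals ~_H for some subgroup H ≤ Aut(P/F) (namely H = H_R). -/

import Mathlib

/-- The subgroup `Aut(P/F)` of permutations of programs preserving functionality. -/
def autSub {P F : Type*} (Q : P → F) : Subgroup (Equiv.Perm P) where
  carrier := {φ | ∀ p, Q (φ p) = Q p}
  one_mem' := fun _ => rfl
  mul_mem' := by
    intro a b ha hb p
    have : (a * b) p = a (b p) := rfl
    rw [this, ha (b p), hb p]
  inv_mem' := by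
    intro a ha p
    have h := ha (a⁻¹ p)
    rw [show a (a⁻¹ p) = p from Equiv.apply_symm_apply a p] at h
    exact h.symm

/-- The relation `~_H` induced by a subgroup of permutations. -/
def grpRel {P : Type*} (H : Subgroup (Equiv.Perm P)) : P → P → Prop :=
  fun p p' => ∃ φ ∈ H, φ p = p'

theorem grpRel_equivalence {P : Type*} (H : Subgroup (Equiv.Perm P)) :
    Equivalence (grpRel H) := by
  constructor
  · exact fun p => ⟨1, H.one_mem, rfl⟩
  · rintro p q ⟨φ, hφ, rfl⟩
    exact ⟨φ⁻¹, H.inv_mem hφ, Equiv.symm_apply_apply φ p⟩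
  · rintro p q r ⟨φ, hφ, rfl⟩ ⟨ψ, hψ, rfl⟩
    exact ⟨ψ * φ, H.mul_mem hψ hφ, rfl⟩

/-- The setoid on programs induced by a subgroup of permutations. -/
def setoidOf {P : Type*} (H : Subgroup (Equiv.Perm P)) : Setoid P :=
  ⟨grpRel H, grpRel_equivalence H⟩

/-- The subgroup `H_R` of permutations preserving an equivalence relation `R`. -/
def HR {P : Type*} (R : P → P → Prop) (hR : Equivalence R) : Subgroup (Equiv.Perm P) where
  carrier := {φ | ∀ p, R p (φ p)}
  one_mem' := fun p => hR.refl p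
  mul_mem' := by
    intro a b ha hb p
    have : (a * b) p = a (b p) := rfl
    rw [this]
    exact hR.trans (hb p) (ha (b p))
  inv_mem' := by
    intro a ha p
    have h := ha (a⁻¹ p)
    rw [show a (a⁻¹ p) = p from Equiv.apply_symm_apply a p] at h
    exact hR.symm h


theorem grpRel_surjective {P F : Type*} (Q : P → F)
    (R : P → P → Prop) (hR : Equivalence R)
    (href : ∀ p p' : P, R p p' → Q p = Q p') :
    ∃ H : Subgroup (Equiv.Perm P), H ≤ autSub Q ∧
      ∀ p p' : P, (∃ φ ∈ H, φ p = p') ↔ R p p' := by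
  classical
  refine ⟨HR R hR, ?_, ?_⟩
  · intro φ hφ p
    exact (href p (φ p) (hφ p)).symm
  · intro p p'
    constructor
    · rintro ⟨φ, hφ, rfl⟩
      exact hφ p
    · intro h
      refine ⟨Equiv.swap p p', ?_, Equiv.swap_apply_left p p'⟩
      intro q
      rcases eq_or_ne q p with rfl | hq
      · rwa [Equiv.swap_apply_left]
      rcases eq_or_ne q p' with rfl | hq'
      · rw [Equiv.swap_apply_right]
        exact hR.symm h
      · rw [Equiv.swap_apply_of_ne_of_ne hq hq']
        exact hR.refl q
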